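/- For all n ≥ 0, ∑_{k=0}^n C(n,k) L_k L_{n-k} = 2 + 2^n L_n, where L_n are the Lucas numbers. -/
import Mathlib


/-- The Lucas numbers: `L 0 = 2`, `L 1 = 1`, `L (n+2) = L (n+1) + L n`. -/
def lucas : ℕ → ℕ
  | 0 => 2
  | 1 => 1
  | n + 2 => lucas (n + 1) + lucas n

noncomputable def phi : ℝ := (1 + Real.sqrt 5) / 2
noncomputable def psi : ℝ := (1 - Real.sqrt 5) / 2

lemma sqrt5_sq : Real.sqrt 5 ^ 2 = 5 := Real.sq_sqrt (by norm_num)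

lemma phi_sq : phi ^ 2 = phi + 1 := by
  unfold phi; have := sqrt5_sq; nlinarith [this]

lemma psi_sq : psi ^ 2 = psi + 1 := by
  unfold psi; have := sqrt5_sq; nlinarith [this]

lemma lucas_real (n : ℕ) : (lucas n : ℝ) = phi ^ n + psi ^ n := by
  induction n using Nat.twoStepInduction with
  | zero => simp [lucas, phi, psi]; ring
  | one => simp [lucas, phi, psi]
  | more n ih1 ih2 =>
    have : (lucas (n + 2) : ℝ) = (lucas (n+1) : ℝ) + lucas n := by
      rw [lucas]; push_cast; ring
    rw [this, ih1, ih2]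
    have hφ : phi ^ (n + 2) = phi ^ (n+1) + phi ^ n := by
      have : phi ^ (n + 2) = phi ^ n * phi ^ 2 := by ring
      rw [this, phi_sq]; ring
    have hψ : psi ^ (n + 2) = psi ^ (n+1) + psi ^ n := by
      have : psi ^ (n + 2) = psi ^ n * psi ^ 2 := by ring
      rw [this, psi_sq]; ring
    rw [hφ, hψ]; ring

lemma binom_sum (n : ℕ) (x y : ℝ) :
    ∑ k ∈ Finset.range (n + 1), (n.choose k : ℝ) * x ^ k * y ^ (n - k) = (x + y) ^ n := by
  rw [add_pow]
  exact Finset.sum_congr rfl fun k _ => by ring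

theorem binomial_conv_lucas (n : ℕ) :
    ∑ k ∈ Finset.range (n + 1), n.choose k * lucas k * lucas (n - k) =
      2 + 2 ^ n * lucas n := by
  have key : (↑(∑ k ∈ Finset.range (n + 1), n.choose k * lucas k * lucas (n - k)) : ℝ)
      = ((2 + 2 ^ n * lucas n : ℕ) : ℝ) := by
    push_cast
    have h1 : ∑ k ∈ Finset.range (n + 1),
        (n.choose k : ℝ) * lucas k * lucas (n - k)
        = ∑ k ∈ Finset.range (n + 1),
          ((n.choose k : ℝ) * phi ^ k * phi ^ (n-k) + (n.choose k : ℝ) * phi ^ k * psi ^ (n-k)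
          + (n.choose k : ℝ) * psi ^ k * phi ^ (n-k) + (n.choose k : ℝ) * psi ^ k * psi ^ (n-k)) := by
      refine Finset.sum_congr rfl fun k _ => ?_
      rw [lucas_real, lucas_real]; ring
    rw [h1]
    simp only [Finset.sum_add_distrib, binom_sum]
    have hps : phi + psi = 1 := by unfold phi psi; ring
    have hpp : phi + phi = 2 * phi := by ring
    have hss : psi + psi = 2 * psi := by ring
    simp only [hps, hpp, hss, one_pow, mul_pow]
    rw [add_comm psi phi, hps, lucas_real]; ring
  exact_mod_cast key
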